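/- Let x : ℤ → ℝ be a sequence, t ∈ ℤ, n ≥ 1, d ≥ 1 with d ≤ n, and define the lag vector v ∈ ℝⁿ by v_i = x(t − i) for i = 1, …, n. Let R be the n×n all-ones upper-triangular matrix, and let Δ denote the backward difference operator (Δx)(s) = x(s) − x(s−1), with Δ^d its d-fold iterate. Then for every index i with 1 ≤ i ≤ n − d, the i-th entry of R^{-d} v equals (Δ^d x)(t − i). (Thus applying the difference matrix P_d^{-1} = R^{-d} to the vector of the first n lags of x produces d-th differences of x in the first n − d coordinates, which is the algebraic content of the lag-augmentation device.) -/
import Mathlib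

open Matrix

def Rmat (n : ℕ) : Matrix (Fin n) (Fin n) ℝ :=
  Matrix.of fun i j => if i ≤ j then 1 else 0

def bdiff (x : ℤ → ℝ) : ℤ → ℝ := fun s => x s - x (s - 1)

def Smat (n : ℕ) : Matrix (Fin n) (Fin n) ℝ :=
  Matrix.of fun i j => (if j = i then (1:ℝ) else 0) - (if (j:ℕ) = (i:ℕ)+1 then 1 else 0)

lemma aux_sum (n : ℕ) (i : Fin n) (f : Fin n → ℝ) :
    ∑ k : Fin n, (if (k:ℕ) = (i:ℕ)+1 then f k else 0)
      = if h : (i:ℕ)+1 < n then f ⟨(i:ℕ)+1, h⟩ else 0 := by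
  by_cases h : (i:ℕ)+1 < n
  · rw [dif_pos h, Finset.sum_eq_single (⟨(i:ℕ)+1, h⟩ : Fin n)]
    · simp
    · intro k _ hk
      rw [if_neg]
      intro hc
      exact hk (Fin.ext hc)
    · simp
  · rw [dif_neg h]
    apply Finset.sum_eq_zero
    intro k _
    rw [if_neg]
    intro hc
    exact h (hc ▸ k.isLt)

lemma smat_mul_rmat (n : ℕ) : Smat n * Rmat n = 1 := by
  ext i j
  simp only [Matrix.mul_apply, Smat, Rmat, Matrix.of_apply, sub_mul, one_mul, zero_mul,
    ite_mul, Finset.sum_sub_distrib]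
  rw [Finset.sum_ite_eq' Finset.univ i (fun k => if k ≤ j then (1:ℝ) else 0),
    aux_sum n i (fun k => if k ≤ j then (1:ℝ) else 0)]
  simp only [Finset.mem_univ, if_true]
  by_cases h : (i:ℕ)+1 < n
  · rw [dif_pos h]
    rcases eq_or_ne i j with rfl | hne
    · simp [Fin.le_def, Matrix.one_apply]
    · have : ¬ ((⟨(i:ℕ)+1, h⟩ : Fin n) ≤ j) ∨ i ≤ j := by
        by_cases hij : i ≤ j
        · right; exact hij
        · left; simp only [Fin.le_def] at hij ⊢; omega
      rcases le_or_gt i j with hij | hij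
      · have h1 : (⟨(i:ℕ)+1, h⟩ : Fin n) ≤ j := by
          simp only [Fin.le_def] at hij ⊢
          rcases Nat.lt_or_ge (i:ℕ) (j:ℕ) with h2 | h2
          · omega
          · exact absurd (Fin.ext (le_antisymm hij h2)) hne
        simp [hij, h1, Matrix.one_apply, hne]
      · have h1 : ¬ ((⟨(i:ℕ)+1, h⟩ : Fin n) ≤ j) := by
          simp only [Fin.le_def] at hij ⊢; omega
        simp [not_le.mpr hij, h1, Matrix.one_apply, hne]
  · rw [dif_neg h]
    have hj : (j:ℕ) ≤ (i:ℕ) := by have := j.isLt; omega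
    rcases eq_or_ne i j with rfl | hne
    · simp [Matrix.one_apply]
    · have : ¬ (i ≤ j) := by
        simp only [Fin.le_def]
        intro hc
        exact hne (Fin.ext (le_antisymm hc hj))
      simp [this, Matrix.one_apply, hne]

lemma rmat_pow_mul_smat_pow (n d : ℕ) : Rmat n ^ d * Smat n ^ d = 1 := by
  have h1 := smat_mul_rmat n
  have h2 : Rmat n * Smat n = 1 := mul_eq_one_comm.mpr h1
  have hc : Commute (Rmat n) (Smat n) := by
    unfold Commute SemiconjBy
    rw [h2, h1]
  calc Rmat n ^ d * Smat n ^ d = (Rmat n * Smat n) ^ d := (hc.mul_pow d).symm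
    _ = 1 := by rw [h2, one_pow]

lemma smat_mulVec (n : ℕ) (v : Fin n → ℝ) (i : Fin n) :
    (Smat n).mulVec v i = v i - (if h : (i:ℕ)+1 < n then v ⟨(i:ℕ)+1, h⟩ else 0) := by
  simp only [Matrix.mulVec, dotProduct, Smat, Matrix.of_apply, sub_mul, one_mul, zero_mul,
    ite_mul, Finset.sum_sub_distrib]
  rw [Finset.sum_ite_eq' Finset.univ i v, aux_sum n i v]
  simp

lemma key (n : ℕ) : ∀ (d k : ℕ) (y : ℤ → ℝ) (t : ℤ) (v : Fin n → ℝ),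
    (∀ i : Fin n, (i:ℕ)+1+k ≤ n → v i = y (t - ((i:ℕ)+1 : ℤ))) →
    ∀ i : Fin n, (i:ℕ)+1+k+d ≤ n →
      ((Smat n)^d).mulVec v i = (bdiff^[d] y) (t - ((i:ℕ)+1 : ℤ)) := by
  intro d
  induction d with
  | zero =>
    intro k y t v hv i hi
    simpa using hv i (by omega)
  | succ d ih =>
    intro k y t v hv i hi
    rw [pow_succ, ← Matrix.mulVec_mulVec]
    have hw : ∀ j : Fin n, (j:ℕ)+1+(k+1) ≤ n →
        (Smat n).mulVec v j = (bdiff y) (t - ((j:ℕ)+1 : ℤ)) := by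
      intro j hj
      rw [smat_mulVec]
      have h1 : (j:ℕ)+1 < n := by omega
      rw [dif_pos h1, hv j (by omega), hv ⟨(j:ℕ)+1, h1⟩ (by simp; omega)]
      simp only [bdiff]
      push_cast
      ring_nf
    have := ih (k+1) (bdiff y) t ((Smat n).mulVec v) hw i (by omega)
    rw [this, ← Function.iterate_succ_apply]

/-- Applying the difference matrix `P_d⁻¹ = R^{-d}` to the vector of the first `n` lags
`v_i = x(t − i)` (here 0-indexed: `v i = x(t − (i+1))`) yields `d`-th differences of `x`
in the first `n − d` coordinates: `(R^{-d} v)_i = (Δ^d x)(t − i)` for `1 ≤ i ≤ n − d`. -/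
theorem stmt6 (x : ℤ → ℝ) (t : ℤ) (n d : ℕ) (hn : 1 ≤ n) (hd : 1 ≤ d) (hdn : d ≤ n)
    (v : Fin n → ℝ) (hv : ∀ i : Fin n, v i = x (t - ((i : ℕ) + 1 : ℤ)))
    (i : Fin n) (hi : (i : ℕ) + 1 ≤ n - d) :
    ((Rmat n ^ d)⁻¹).mulVec v i = (bdiff^[d] x) (t - ((i : ℕ) + 1 : ℤ)) := by
  have hinv : (Rmat n ^ d)⁻¹ = Smat n ^ d :=
    Matrix.inv_eq_right_inv (rmat_pow_mul_smat_pow n d)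
  rw [hinv]
  exact key n d 0 x t v (fun j _ => hv j) i (by omega)
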